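/- Let X be an irreducible shift of finite type and f in SV(X) (summable variation). Then every equilibrium measure for f on X has full support. -/

import Mathlib

open MeasureTheory

/-- The left shift by `k` on bi-infinite sequences. `shiftZ 1` is the shift map `σ`. -/
def shiftZ {A : Type*} (k : ℤ) (x : ℤ → A) : ℤ → A := fun n => x (n + k)

/-- The word `w` occurs in `x` at position `i`. -/
def occursAt {A : Type*} (x : ℤ → A) (w : List A) (i : ℤ) : Prop :=
  ∀ j : Fin w.length, x (i + (j.1 : ℤ)) = w.get j

/-- The word `w` belongs to the language of `X`. -/
def InLanguage {A : Type*} (X : Set (ℤ → A)) (w : List A) : Prop :=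
  ∃ x ∈ X, ∃ i : ℤ, occursAt x w i

/-- A shift space: a closed, shift-invariant subset of the full shift. -/
def IsShiftSpace {A : Type*} [TopologicalSpace A] (X : Set (ℤ → A)) : Prop :=
  IsClosed X ∧ ∀ k : ℤ, ∀ x ∈ X, shiftZ k x ∈ X

/-- `x` is doubly transitive in `X`. -/
def DoublyTransitive {A : Type*} (X : Set (ℤ → A)) (x : ℤ → A) : Prop :=
  ∀ w : List A, InLanguage X w →
    (∀ N : ℤ, ∃ i : ℤ, N ≤ i ∧ occursAt x w i) ∧
    (∀ N : ℤ, ∃ i : ℤ, i ≤ N ∧ occursAt x w i)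

/-- Irreducibility: any two words of the language can be joined within the language. -/
def IrreducibleShift {A : Type*} (X : Set (ℤ → A)) : Prop :=
  ∀ u v : List A, InLanguage X u → InLanguage X v →
    ∃ w : List A, InLanguage X (u ++ w ++ v)

/-- `μ` is fully supported on `X`: every open set meeting `X` has positive measure. -/
def FullSupportOn {A : Type*} [TopologicalSpace A] [MeasurableSpace A]
    (μ : Measure (ℤ → A)) (X : Set (ℤ → A)) : Prop :=
  ∀ U : Set (ℤ → A), IsOpen U → (U ∩ X).Nonempty → 0 < μ U

/-- The Gibbs (homoclinic/tail) relation on `X`. -/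
def GibbsRel {A : Type*} (X : Set (ℤ → A)) (x y : ℤ → A) : Prop :=
  x ∈ X ∧ y ∈ X ∧ ∃ N : ℤ, ∀ n : ℤ, N < |n| → x n = y n

/-- A shift of finite type: defined by excluding a finite set of words of some length `n`. -/
def IsSFT {A : Type*} (X : Set (ℤ → A)) : Prop :=
  ∃ (n : ℕ) (F : Finset (List A)),
    X = {x | ∀ i : ℤ, (List.ofFn fun j : Fin n => x (i + (j.1 : ℤ))) ∉ F}

/-- The `k`-th variation of `f` over `X`. -/
noncomputable def varOf {A : Type*} (X : Set (ℤ → A)) (f : (ℤ → A) → ℝ) (k : ℕ) : ℝ :=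
  sSup {d : ℝ | ∃ x ∈ X, ∃ y ∈ X, (∀ i : ℤ, |i| ≤ (k : ℤ) → x i = y i) ∧ d = |f x - f y|}

/-- `f` has summable variation on `X`. -/
def HasSummableVariation {A : Type*} (X : Set (ℤ → A)) (f : (ℤ → A) → ℝ) : Prop :=
  Summable (varOf X f)

/-- `μ` is nonsingular for the relation `Rel`: the saturation of any null Borel set is null. -/
def NonsingularFor {A : Type*} [MeasurableSpace A]
    (μ : Measure (ℤ → A)) (Rel : (ℤ → A) → (ℤ → A) → Prop) : Prop :=
  ∀ S : Set (ℤ → A), MeasurableSet S → μ S = 0 → μ {y | ∃ x ∈ S, Rel x y} = 0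

/-- `μ` is an equilibrium measure for `f` on `(X, T)`, with respect to an entropy
functional `ent`. -/
def IsEquilibriumFor {A : Type*} [MeasurableSpace A]
    (ent : Measure (ℤ → A) → ℝ) (T : (ℤ → A) → (ℤ → A)) (X : Set (ℤ → A))
    (f : (ℤ → A) → ℝ) (μ : Measure (ℤ → A)) : Prop :=
  IsProbabilityMeasure μ ∧ μ X = 1 ∧ μ.map T = μ ∧
    ∀ lam : Measure (ℤ → A), IsProbabilityMeasure lam → lam X = 1 → lam.map T = lam →
      ent lam + ∫ x, f x ∂lam ≤ ent μ + ∫ x, f x ∂μ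

/-!
If an open set `U` meeting `X` were `μ`-null, it would contain a null cylinder `[w]` with `w` in
the language of `X`, and by shift invariance the set `S` of points in which `w` occurs anywhere
would be null. Nonsingularity for the Gibbs relation then makes the Gibbs saturation of `S` null.
But on an irreducible shift of finite type every point `y` is homoclinic to a point of `S`:
irreducibility gives a loop `u … w … u` of some length `ℓ` through a block `u` recurring in `y`;
choosing two recurrences `s < t` with `ℓ ∣ t - s`, replace `y` on `[s, t)` by the loop repeated
`(t - s) / ℓ` times. Hence `μ X = 0`, which is absurd.
-/

open Set

section Shift
variable {A : Type*}

lemma shiftZ_zero : (shiftZ 0 : (ℤ → A) → ℤ → A) = id := by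
  funext x n
  simp [shiftZ]

lemma shiftZ_comp_shiftZ (j k : ℤ) : shiftZ j ∘ shiftZ k = (shiftZ (j + k) : (ℤ → A) → ℤ → A) := by
  funext x n
  simp only [Function.comp, shiftZ, add_assoc]

lemma iterate_shiftZ_one (n : ℕ) : (shiftZ 1)^[n] = (shiftZ n : (ℤ → A) → ℤ → A) := by
  induction n with
  | zero => exact shiftZ_zero.symm
  | succ n ih => rw [Function.iterate_succ', ih, shiftZ_comp_shiftZ, add_comm]; push_cast; rfl

end Shift

section Words
variable {A : Type*} {x y : ℤ → A} {u v w : List A} {i k : ℤ}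

lemma occursAt_ofFn {n : ℕ} {b : Fin n → A} :
    occursAt x (List.ofFn b) i ↔ ∀ j : Fin n, x (i + j) = b j := by
  constructor
  · intro h j
    simpa using h ⟨j, by simp⟩
  · intro h j
    simpa using h ⟨j, by simpa using j.2⟩

lemma occursAt_nil (x : ℤ → A) (i : ℤ) : occursAt x [] i := fun j => j.elim0

lemma occursAt_shiftZ_iff : occursAt (shiftZ k x) w i ↔ occursAt x w (i + k) := by
  simp only [occursAt, shiftZ, add_right_comm]

lemma occursAt.of_append (h : occursAt x (u ++ v) i) :
    occursAt x u i ∧ occursAt x v (i + u.length) := by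
  refine ⟨fun j => ?_, fun j => ?_⟩
  · simpa [List.getElem_append_left] using h ⟨j, by simp; omega⟩
  · simpa [List.getElem_append_right, add_assoc] using h ⟨u.length + j, by simp⟩

lemma occursAt_iff_eqOn_of_occursAt (hy : occursAt y w i) :
    occursAt x w i ↔ EqOn x y (Ico i (i + w.length)) := by
  constructor
  · rintro hx a ⟨hia, hai⟩
    obtain ⟨j, rfl⟩ : ∃ j : ℕ, a = i + j := ⟨(a - i).toNat, by omega⟩
    have hj : j < w.length := by omega
    rw [hx ⟨j, hj⟩, hy ⟨j, hj⟩]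
  · intro h j
    rw [h ⟨by simp, by simp⟩, hy j]

lemma occursAt.eqOn (hx : occursAt x w i) (hy : occursAt y w i) :
    EqOn x y (Ico i (i + w.length)) :=
  (occursAt_iff_eqOn_of_occursAt hy).1 hx

lemma occursAt.congr (hx : occursAt x w i) (h : EqOn x y (Ico i (i + w.length))) :
    occursAt y w i :=
  (occursAt_iff_eqOn_of_occursAt hx).2 h.symm

end Words

section Gluing
variable {A : Type*} {X : Set (ℤ → A)} {x y z : ℤ → A} {u : List A} {a : ℤ} {m : ℕ}

def glueAt (a : ℤ) (x y : ℤ → A) : ℤ → A := fun i => if i < a then x i else y i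

lemma glueAt_of_lt {i : ℤ} (h : i < a) : glueAt a x y i = x i := if_pos h

lemma glueAt_of_le {i : ℤ} (h : a ≤ i) : glueAt a x y i = y i := if_neg (not_lt.2 h)

lemma eqOn_glueAt_right (a : ℤ) (x y : ℤ → A) : EqOn (glueAt a x y) y (Ici a) :=
  fun _ => glueAt_of_le

lemma eqOn_glueAt_left (hx : occursAt x u a) (hy : occursAt y u a) :
    EqOn (glueAt a x y) x (Iio (a + u.length)) := by
  intro i hi
  rcases lt_or_ge i a with hia | hai
  · exact glueAt_of_lt hia
  · exact (glueAt_of_le hai).trans (hx.eqOn hy ⟨hai, hi⟩).symm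

/-- The gluing characterisation of `m`-step shifts of finite type. -/
def IsMStep (X : Set (ℤ → A)) (m : ℕ) : Prop :=
  ∀ x ∈ X, ∀ y ∈ X, ∀ a : ℤ, EqOn x y (Ico a (a + m)) → glueAt a x y ∈ X

lemma IsSFT.exists_isMStep (hX : IsSFT X) : ∃ m, IsMStep X m := by
  obtain ⟨n, F, rfl⟩ := hX
  refine ⟨n - 1, fun x hx y hy a hxy i => ?_⟩
  rcases lt_or_ge i a with hia | hai
  · convert hx i using 3
    funext j
    have := j.2
    rcases lt_or_ge (i + j) a with h | h
    · exact glueAt_of_lt h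
    · exact (glueAt_of_le h).trans (hxy ⟨h, by omega⟩).symm
  · convert hy i using 3
    funext j
    exact glueAt_of_le (by omega)

lemma IsMStep.glueAt_mem (hX : IsMStep X u.length) (hx : x ∈ X) (hy : y ∈ X)
    (hxu : occursAt x u a) (hyu : occursAt y u a) : glueAt a x y ∈ X :=
  hX x hx y hy a (hxu.eqOn hyu)

lemma IsMStep.exists_pump (hX : IsMStep X u.length) (hshift : ∀ k : ℤ, ∀ x ∈ X, shiftZ k x ∈ X)
    (hz : z ∈ X) {ℓ : ℕ} (h0 : occursAt z u 0) (hℓ : occursAt z u ℓ) :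
    ∀ c : ℕ, 1 ≤ c →
      ∃ z' ∈ X, EqOn z' z (Iio ((ℓ : ℤ) + u.length)) ∧ occursAt z' u (c * ℓ : ℕ) := by
  refine Nat.le_induction ⟨z, hz, eqOn_refl _ _, by simpa using hℓ⟩ ?_
  rintro c hc ⟨z', hz', hz'z, hz'u⟩
  set z'' := shiftZ (-(c * ℓ : ℕ)) z
  have hz''u : occursAt z'' u (c * ℓ : ℕ) := occursAt_shiftZ_iff.2 (by simpa using h0)
  refine ⟨glueAt (c * ℓ : ℕ) z' z'', hX.glueAt_mem hz' (hshift _ _ hz) hz'u hz''u, ?_, ?_⟩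
  · refine ((eqOn_glueAt_left hz'u hz''u).mono (Iio_subset_Iio ?_)).trans hz'z
    have : ℓ ≤ c * ℓ := Nat.le_mul_of_pos_left ℓ (by omega)
    omega
  · have : occursAt z'' u ((c + 1) * ℓ : ℕ) :=
      occursAt_shiftZ_iff.2 (by convert hℓ using 2; push_cast; ring)
    refine this.congr ((eqOn_glueAt_right _ _ _).symm.mono fun i hi => ?_)
    have : c * ℓ ≤ (c + 1) * ℓ := Nat.mul_le_mul_right ℓ c.le_succ
    simp only [mem_Ico, mem_Ici] at hi ⊢
    omega

lemma IsMStep.exists_splice (hX : IsMStep X u.length)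
    (hshift : ∀ k : ℤ, ∀ x ∈ X, shiftZ k x ∈ X) (hy : y ∈ X) (hz : z ∈ X) {s t : ℤ}
    (hst : s ≤ t) (hys : occursAt y u s) (hyt : occursAt y u t) (hz0 : occursAt z u 0)
    (hzt : occursAt z u (t - s)) :
    ∃ x ∈ X, EqOn x y (Ico s t)ᶜ ∧ EqOn x (shiftZ (-s) z) (Ico s t) := by
  set z' := shiftZ (-s) z
  have hz's : occursAt z' u s := occursAt_shiftZ_iff.2 (by simpa using hz0)
  have hz't : occursAt z' u t := occursAt_shiftZ_iff.2 (by simpa [sub_eq_add_neg] using hzt)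
  have hx₁ : glueAt s y z' ∈ X := hX.glueAt_mem hy (hshift _ _ hz) hys hz's
  have hx₁t : occursAt (glueAt s y z') u t :=
    hz't.congr ((eqOn_glueAt_right _ _ _).symm.mono fun i hi => le_trans hst hi.1)
  refine ⟨glueAt t (glueAt s y z') y, hX.glueAt_mem hx₁ hy hx₁t hyt, fun i hi => ?_,
    fun i hi => (glueAt_of_lt hi.2).trans (glueAt_of_le hi.1)⟩
  rcases lt_or_ge i t with hit | hti
  · have his : i < s := by simp only [mem_compl_iff, mem_Ico, not_and, not_lt] at hi; omega
    exact (glueAt_of_lt hit).trans (glueAt_of_lt his)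
  · exact glueAt_of_le hti

end Gluing

lemma exists_infinite_setOf_occursAt {A : Type*} [Finite A] (y : ℤ → A) (m : ℕ) :
    ∃ u : List A, u.length = m ∧ {t : ℕ | occursAt y u t}.Infinite := by
  obtain ⟨b, hb⟩ := Finite.exists_infinite_fiber fun (t : ℕ) (j : Fin m) => y (t + j)
  exact ⟨List.ofFn b, List.length_ofFn,
    (infinite_coe_iff.1 hb).mono fun t ht => occursAt_ofFn.2 fun j => congrFun ht j⟩

lemma IrreducibleShift.exists_loop_through {A : Type*} {X : Set (ℤ → A)} {u w : List A}
    (hirr : IrreducibleShift X) (hshift : ∀ k : ℤ, ∀ x ∈ X, shiftZ k x ∈ X)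
    (hu : InLanguage X u) (hw : InLanguage X w) :
    ∃ z ∈ X, ∃ p ℓ : ℕ, p + w.length ≤ ℓ ∧
      occursAt z u 0 ∧ occursAt z w p ∧ occursAt z u ℓ := by
  obtain ⟨c, hc⟩ := hirr u w hu hw
  obtain ⟨c', z, hz, i, hi⟩ := hirr _ u hc hu
  obtain ⟨h₁, hu₂⟩ := (occursAt_shiftZ_iff.2 (by rwa [zero_add]) : occursAt (shiftZ i z) _ 0).of_append
  obtain ⟨h₂, -⟩ := h₁.of_append
  obtain ⟨h₃, hw'⟩ := h₂.of_append
  obtain ⟨hu₁, -⟩ := h₃.of_append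
  refine ⟨shiftZ i z, hshift i z hz, (u ++ c).length, (u ++ c ++ w ++ c').length,
    by simp only [List.length_append]; omega, hu₁, ?_, ?_⟩
  · rwa [zero_add] at hw'
  · rwa [zero_add] at hu₂

theorem exists_gibbsRel_occursAt {A : Type*} [Finite A] {X : Set (ℤ → A)} {m : ℕ}
    (hX : IsMStep X m) (hshift : ∀ k : ℤ, ∀ x ∈ X, shiftZ k x ∈ X)
    (hirr : IrreducibleShift X) {y : ℤ → A} (hy : y ∈ X) {w : List A} (hw : InLanguage X w) :
    ∃ x, GibbsRel X x y ∧ ∃ p, occursAt x w p := by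
  rcases eq_or_ne w [] with rfl | hw₀
  · exact ⟨y, ⟨hy, hy, 0, fun _ _ => rfl⟩, 0, occursAt_nil y 0⟩
  obtain ⟨u, rfl, hO⟩ := exists_infinite_setOf_occursAt y m
  have hu : InLanguage X u := let ⟨t, ht⟩ := hO.nonempty; ⟨y, hy, t, ht⟩
  obtain ⟨z₀, hz₀, p, ℓ, hpℓ, h0, hp, hℓ⟩ := hirr.exists_loop_through hshift hu hw
  have hℓ₀ : 0 < ℓ := by have := List.length_pos_of_ne_nil hw₀; omega
  obtain ⟨s, hs, t, ht, hst, hmod⟩ := Nat.exists_lt_modEq_of_infinite hO hℓ₀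
  obtain ⟨c, hc⟩ := (Nat.modEq_iff_dvd' hst.le).1 hmod
  have hc₁ : 1 ≤ c := Nat.pos_of_ne_zero fun h => by simp [h] at hc; omega
  have hts : (t : ℤ) - s = ℓ * c := by rw [← Nat.cast_sub hst.le, hc]; push_cast; rfl
  obtain ⟨z, hz, hzz₀, hzu⟩ := hX.exists_pump hshift hz₀ h0 hℓ c hc₁
  have hlen : (p : ℤ) + w.length ≤ ℓ := by exact_mod_cast hpℓ
  obtain ⟨x, hx, hxy, hxz⟩ := hX.exists_splice hshift hy hz (Nat.cast_le.2 hst.le) hs ht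
    (h0.congr (hzz₀.symm.mono fun i hi => by simp only [mem_Ico, mem_Iio] at hi ⊢; omega))
    (by rwa [hts, mul_comm])
  refine ⟨x, ⟨hx, hy, t, fun i hi => hxy fun hi' => ?_⟩, s + p, ?_⟩
  · rw [abs_of_nonneg (by simp only [mem_Ico] at hi'; omega)] at hi
    exact absurd hi'.2 (by omega)
  · have hzw : occursAt z w p := hp.congr (hzz₀.symm.mono fun i hi => by
      simp only [mem_Ico, mem_Iio] at hi ⊢; omega)
    refine (occursAt_shiftZ_iff.2 (by simpa using hzw)).congr (hxz.symm.mono fun i hi => ?_)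
    have : (ℓ : ℤ) ≤ t - s := by rw [hts]; exact_mod_cast Nat.le_mul_of_pos_right ℓ hc₁
    simp only [mem_Ico] at hi ⊢
    omega

section Measure
variable {A : Type*} [MeasurableSpace A]

lemma measurable_shiftZ (k : ℤ) : Measurable (shiftZ k : (ℤ → A) → ℤ → A) :=
  measurable_pi_lambda _ fun n => measurable_pi_apply (n + k)

lemma measurePreserving_shiftZ {μ : Measure (ℤ → A)} (h : μ.map (shiftZ 1) = μ) (k : ℤ) :
    MeasurePreserving (shiftZ k) μ μ := by
  have hnat (n : ℕ) : MeasurePreserving (shiftZ n) μ μ := by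
    simpa only [iterate_shiftZ_one] using (MeasurePreserving.mk (measurable_shiftZ 1) h).iterate n
  obtain ⟨n, rfl | rfl⟩ := Int.eq_nat_or_neg k
  · exact hnat n
  · refine ⟨measurable_shiftZ _, ?_⟩
    conv_lhs => rw [← (hnat n).map_eq]
    rw [Measure.map_map (measurable_shiftZ _) (measurable_shiftZ _), shiftZ_comp_shiftZ,
      neg_add_cancel, shiftZ_zero, Measure.map_id]

lemma measurableSet_setOf_occursAt [MeasurableSingletonClass A] (w : List A) (i : ℤ) :
    MeasurableSet {x : ℤ → A | occursAt x w i} := by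
  simp only [occursAt, ofPred_forall]
  exact MeasurableSet.iInter fun j => measurable_pi_apply _ (measurableSet_singleton _)

lemma measure_iUnion_setOf_occursAt_eq_zero [MeasurableSingletonClass A] {μ : Measure (ℤ → A)}
    (h : μ.map (shiftZ 1) = μ) {w : List A} {i : ℤ} (h0 : μ {x | occursAt x w i} = 0) :
    μ (⋃ k : ℤ, {x | occursAt x w k}) = 0 := by
  refine measure_iUnion_null fun k => ?_
  have : {x : ℤ → A | occursAt x w k} = shiftZ (k - i) ⁻¹' {x | occursAt x w i} := by
    ext x
    simp [occursAt_shiftZ_iff]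
  rw [this, (measurePreserving_shiftZ h _).measure_preimage
    (measurableSet_setOf_occursAt w i).nullMeasurableSet, h0]

end Measure

lemma exists_occursAt_subset_of_isOpen {A : Type*} [TopologicalSpace A] {U : Set (ℤ → A)}
    (hU : IsOpen U) {y : ℤ → A} (hy : y ∈ U) :
    ∃ w i, occursAt y w i ∧ {x | occursAt x w i} ⊆ U := by
  obtain ⟨I, V, hV, hIU⟩ := isOpen_pi_iff.1 hU y hy
  set n := I.sup Int.natAbs
  refine ⟨List.ofFn fun j : Fin (2 * n + 1) => y (-n + j), -n, occursAt_ofFn.2 fun _ => rfl,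
    fun x hx => hIU fun a ha => ?_⟩
  have han : a.natAbs ≤ n := Finset.le_sup (f := Int.natAbs) ha
  have hxa := occursAt_ofFn.1 hx ⟨(a + n).toNat, by omega⟩
  rw [show -(n : ℤ) + (a + n).toNat = a by omega] at hxa
  exact hxa ▸ (hV a ha).2

/-- The Lanford–Ruelle theorem enters as the hypothesis `hLR`. -/
theorem stmt16_general {A : Type*} [Fintype A] [TopologicalSpace A] [DiscreteTopology A]
    [MeasurableSpace A] [BorelSpace A]
    (X : Set (ℤ → A)) (hX : IsShiftSpace X) (hSFT : IsSFT X) (hirr : IrreducibleShift X)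
    (f : (ℤ → A) → ℝ)
    (ent : Measure (ℤ → A) → ℝ)
    (hLR : ∀ μ : Measure (ℤ → A), IsEquilibriumFor ent (shiftZ 1) X f μ →
      NonsingularFor μ (GibbsRel X))
    (μ : Measure (ℤ → A)) (hμ : IsEquilibriumFor ent (shiftZ 1) X f μ) :
    FullSupportOn μ X := by
  obtain ⟨m, hm⟩ := hSFT.exists_isMStep
  have hsat := hLR μ hμ
  obtain ⟨-, hμX, hμσ, -⟩ := hμ
  rintro U hU ⟨y, hyU, hyX⟩
  obtain ⟨w, i, hyw, hwU⟩ := exists_occursAt_subset_of_isOpen hU hyU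
  refine pos_iff_ne_zero.2 fun hU₀ => ?_
  set S := ⋃ k : ℤ, {x | occursAt x w k}
  have hS : μ S = 0 :=
    measure_iUnion_setOf_occursAt_eq_zero hμσ (measure_mono_null hwU hU₀)
  have hXS : X ⊆ {y | ∃ x ∈ S, GibbsRel X x y} := fun y' hy' =>
    let ⟨x, hxy, p, hp⟩ := exists_gibbsRel_occursAt hm hX.2 hirr hy' ⟨y, hyX, i, hyw⟩
    ⟨x, mem_iUnion.2 ⟨p, hp⟩, hxy⟩
  have hX₀ := measure_mono_null hXS
    (hsat S (MeasurableSet.iUnion fun k => measurableSet_setOf_occursAt w k) hS)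
  exact one_ne_zero (hμX ▸ hX₀)

/-- on an irreducible SFT, every equilibrium measure for a potential of
summable variation has full support. (The Lanford-Ruelle theorem — equilibrium measures on
SFTs for SV potentials are Gibbs, hence nonsingular for the Gibbs relation — is supplied as
the hypothesis `hLR` on the entropy functional `ent`.) -/
theorem stmt16 {A : Type*} [Fintype A] [TopologicalSpace A] [DiscreteTopology A]
    [MeasurableSpace A] [BorelSpace A]
    (X : Set (ℤ → A)) (hX : IsShiftSpace X) (hSFT : IsSFT X) (hirr : IrreducibleShift X)
    (f : (ℤ → A) → ℝ) (hf : Continuous f) (hsv : HasSummableVariation X f)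
    (ent : Measure (ℤ → A) → ℝ)
    (hLR : ∀ μ : Measure (ℤ → A), IsEquilibriumFor ent (shiftZ 1) X f μ →
      NonsingularFor μ (GibbsRel X))
    (μ : Measure (ℤ → A)) (hμ : IsEquilibriumFor ent (shiftZ 1) X f μ) :
    FullSupportOn μ X :=
  stmt16_general X hX hSFT hirr f ent hLR μ hμ
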